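/- In the algebra A(R) of the Jordanian quantum group GL_{h,g}(2), the ordered monomials {b^α a^β d^γ c^δ : α,β,γ,δ ∈ ℤ≥0} form a linear basis (PBW basis). -/
import Mathlib


/-- Generators of the Jordanian quantum group algebra `A(R)`. -/
inductive JGen : Type | a | b | c | d

noncomputable def Fa : FreeAlgebra ℂ JGen := FreeAlgebra.ι ℂ JGen.a
noncomputable def Fb : FreeAlgebra ℂ JGen := FreeAlgebra.ι ℂ JGen.b
noncomputable def Fc : FreeAlgebra ℂ JGen := FreeAlgebra.ι ℂ JGen.c
noncomputable def Fd : FreeAlgebra ℂ JGen := FreeAlgebra.ι ℂ JGen.d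

/-- The six defining relations of the Jordanian quantum group `GL_{h,g}(2)`. -/
inductive JRel (h g : ℂ) : FreeAlgebra ℂ JGen → FreeAlgebra ℂ JGen → Prop
  | ca : JRel h g (Fc * Fa) (Fa * Fc - g • (Fc * Fc))
  | cd : JRel h g (Fc * Fd) (Fd * Fc - h • (Fc * Fc))
  | db : JRel h g (Fd * Fb) (Fb * Fd + g • (Fa * Fd - Fb * Fc + h • (Fa * Fc) - Fd * Fd))
  | ab : JRel h g (Fa * Fb) (Fb * Fa + h • (Fa * Fd - Fb * Fc + h • (Fa * Fc) - Fa * Fa))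
  | cb : JRel h g (Fc * Fb) (Fb * Fc - h • (Fa * Fc) - g • (Fd * Fc) + (g * h) • (Fc * Fc))
  | da : JRel h g (Fd * Fa) (Fa * Fd + h • (Fa * Fc) - g • (Fd * Fc))

/-- The Jordanian quantum group algebra `A(R)`. -/
abbrev JA (h g : ℂ) := RingQuot (JRel h g)

noncomputable def qa (h g : ℂ) : JA h g := RingQuot.mkAlgHom ℂ (JRel h g) Fa
noncomputable def qb (h g : ℂ) : JA h g := RingQuot.mkAlgHom ℂ (JRel h g) Fb
noncomputable def qc (h g : ℂ) : JA h g := RingQuot.mkAlgHom ℂ (JRel h g) Fc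
noncomputable def qd (h g : ℂ) : JA h g := RingQuot.mkAlgHom ℂ (JRel h g) Fd

/-- The quantum determinant `D = ad - bc + hac`. -/
noncomputable def qdet (h g : ℂ) : JA h g :=
  qa h g * qd h g - qb h g * qc h g + h • (qa h g * qc h g)

namespace JPBW

abbrev Idx : Type := ℕ × ℕ × ℕ × ℕ
abbrev M : Type := Idx →₀ ℂ

noncomputable def ee (α β γ δ : ℕ) : M := Finsupp.single (α, β, γ, δ) 1

variable (h g : ℂ)

/-! ### Right-multiplication operators on the module of normal-form monomials -/

noncomputable def Cop : M →ₗ[ℂ] M :=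
  Finsupp.lift M ℂ Idx fun p => ee p.1 p.2.1 p.2.2.1 (p.2.2.2 + 1)

noncomputable def Dop : M →ₗ[ℂ] M :=
  Finsupp.lift M ℂ Idx fun p =>
    ee p.1 p.2.1 (p.2.2.1 + 1) p.2.2.2 - ((p.2.2.2 : ℂ) * h) • ee p.1 p.2.1 p.2.2.1 (p.2.2.2 + 1)

noncomputable def fA : Idx → M
  | (α, β, 0, δ) => ee α (β+1) 0 δ - ((δ : ℂ) * g) • ee α β 0 (δ+1)
  | (α, β, γ+1, δ) => ee α (β+1) (γ+1) δ + (((γ : ℂ)+1) * h) • ee α (β+1) γ (δ+1)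
      - ((((γ : ℂ)+1) + (δ : ℂ)) * g) • ee α β (γ+1) (δ+1)

noncomputable def Aop : M →ₗ[ℂ] M := Finsupp.lift M ℂ Idx (fA h g)

lemma lift_single (f : Idx → M) (p : Idx) :
    Finsupp.lift M ℂ Idx f (Finsupp.single p 1) = f p := by
  simp [Finsupp.lift_apply, Finsupp.sum_single_index]

@[simp] lemma Cop_ee (α β γ δ : ℕ) : Cop (ee α β γ δ) = ee α β γ (δ+1) := lift_single _ _

@[simp] lemma Dop_ee (α β γ δ : ℕ) :
    Dop h (ee α β γ δ) = ee α β (γ+1) δ - ((δ : ℂ) * h) • ee α β γ (δ+1) := lift_single _ _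

@[simp] lemma Aop_ee0 (α β δ : ℕ) :
    Aop h g (ee α β 0 δ) = ee α (β+1) 0 δ - ((δ : ℂ) * g) • ee α β 0 (δ+1) := lift_single _ _

@[simp] lemma Aop_eeS (α β γ δ : ℕ) :
    Aop h g (ee α β (γ+1) δ) = ee α (β+1) (γ+1) δ + (((γ : ℂ)+1) * h) • ee α (β+1) γ (δ+1)
      - ((((γ : ℂ)+1) + (δ : ℂ)) * g) • ee α β (γ+1) (δ+1) := lift_single _ _

lemma opext {f f' : M →ₗ[ℂ] M} (H : ∀ α β γ δ, f (ee α β γ δ) = f' (ee α β γ δ)) : f = f' := by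
  refine Finsupp.lhom_ext fun p b => ?_
  obtain ⟨α, β, γ, δ⟩ := p
  have hb : (Finsupp.single (α, β, γ, δ) b : M) = b • ee α β γ δ := by
    simp [ee, Finsupp.smul_single]
  rw [hb, map_smul, map_smul, H]

lemma rel_ca (v : M) : Aop h g (Cop v) = Cop (Aop h g v) - g • Cop (Cop v) := by
  have : (Aop h g) ∘ₗ Cop = Cop ∘ₗ (Aop h g) - g • (Cop ∘ₗ Cop) := by
    refine opext fun α β γ δ => ?_
    rcases γ with _ | γ <;>
      simp only [LinearMap.sub_apply, LinearMap.smul_apply, LinearMap.comp_apply,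
        Cop_ee, Dop_ee, Aop_ee0, Aop_eeS, map_sub, map_add, map_smul, Nat.cast_add,
        Nat.cast_one] <;> module
  simpa using LinearMap.congr_fun this v

lemma rel_cd (v : M) : Dop h (Cop v) = Cop (Dop h v) - h • Cop (Cop v) := by
  have : (Dop h) ∘ₗ Cop = Cop ∘ₗ (Dop h) - h • (Cop ∘ₗ Cop) := by
    refine opext fun α β γ δ => ?_
    simp only [LinearMap.sub_apply, LinearMap.smul_apply, LinearMap.comp_apply,
      Cop_ee, Dop_ee, map_sub, map_add, map_smul, Nat.cast_add, Nat.cast_one]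
    module
  simpa using LinearMap.congr_fun this v

lemma rel_da (v : M) :
    Aop h g (Dop h v) = Dop h (Aop h g v) + h • Cop (Aop h g v) - g • Cop (Dop h v) := by
  have : (Aop h g) ∘ₗ (Dop h)
      = Dop h ∘ₗ (Aop h g) + h • (Cop ∘ₗ (Aop h g)) - g • (Cop ∘ₗ (Dop h)) := by
    refine opext fun α β γ δ => ?_
    rcases γ with _ | γ <;>
      simp only [LinearMap.sub_apply, LinearMap.add_apply, LinearMap.smul_apply,
        LinearMap.comp_apply, Cop_ee, Dop_ee, Aop_ee0, Aop_eeS, map_sub, map_add, map_smul,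
        Nat.cast_add, Nat.cast_one] <;> module
  simpa using LinearMap.congr_fun this v

noncomputable def fB : ℕ → ℕ → ℕ → ℕ → M
  | α, β, γ, δ+1 =>
      Cop (fB α β γ δ) - h • Cop (Aop h g (ee α β γ δ)) - g • Cop (Dop h (ee α β γ δ))
        + (g * h) • Cop (Cop (ee α β γ δ))
  | α, β, γ+1, 0 =>
      Dop h (fB α β γ 0) + g • Dop h (Aop h g (ee α β γ 0)) - g • Cop (fB α β γ 0)
        + (g * h) • Cop (Aop h g (ee α β γ 0)) - g • Dop h (Dop h (ee α β γ 0))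
  | α, β+1, 0, 0 =>
      Aop h g (fB α β 0 0) + h • Dop h (Aop h g (ee α β 0 0)) - h • Cop (fB α β 0 0)
        + (h * h) • Cop (Aop h g (ee α β 0 0)) - h • Aop h g (Aop h g (ee α β 0 0))
  | α, 0, 0, 0 => ee (α+1) 0 0 0
  termination_by _ β γ δ => (β, γ, δ)

noncomputable def Bop : M →ₗ[ℂ] M :=
  Finsupp.lift M ℂ Idx fun p => fB h g p.1 p.2.1 p.2.2.1 p.2.2.2

lemma Bop_ee (α β γ δ : ℕ) : Bop h g (ee α β γ δ) = fB h g α β γ δ := lift_single _ _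

lemma rel_cb (v : M) :
    Bop h g (Cop v) = Cop (Bop h g v) - h • Cop (Aop h g v) - g • Cop (Dop h v)
      + (g * h) • Cop (Cop v) := by
  have : (Bop h g) ∘ₗ Cop = Cop ∘ₗ (Bop h g) - h • (Cop ∘ₗ (Aop h g)) - g • (Cop ∘ₗ (Dop h))
      + (g * h) • (Cop ∘ₗ Cop) := by
    refine opext fun α β γ δ => ?_
    simp only [LinearMap.sub_apply, LinearMap.add_apply, LinearMap.smul_apply,
      LinearMap.comp_apply, Cop_ee, Bop_ee]
    rw [fB, Cop_ee, Cop_ee]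
  simpa using LinearMap.congr_fun this v

lemma rel_db_ee : ∀ δ α β γ, Bop h g (Dop h (ee α β γ δ)) =
    Dop h (Bop h g (ee α β γ δ)) + g • Dop h (Aop h g (ee α β γ δ))
      - g • Cop (Bop h g (ee α β γ δ)) + (g * h) • Cop (Aop h g (ee α β γ δ))
      - g • Dop h (Dop h (ee α β γ δ))
  | 0, α, β, γ => by
      have key : Dop h (ee α β γ 0) = ee α β (γ+1) 0 := by simp
      rw [key, Bop_ee, Bop_ee, fB, key]
  | δ+1, α, β, γ => by
      have key : ee α β γ (δ+1) = Cop (ee α β γ δ) := (Cop_ee α β γ δ).symm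
      rw [key]
      simp only [rel_db_ee δ, rel_ca, rel_cd, rel_da, rel_cb, map_add, map_sub, map_smul,
        smul_add, smul_sub, smul_smul]
      module

lemma rel_db (v : M) :
    Bop h g (Dop h v) = Dop h (Bop h g v) + g • Dop h (Aop h g v) - g • Cop (Bop h g v)
      + (g * h) • Cop (Aop h g v) - g • Dop h (Dop h v) := by
  have : (Bop h g) ∘ₗ (Dop h) = Dop h ∘ₗ (Bop h g) + g • (Dop h ∘ₗ (Aop h g))
      - g • (Cop ∘ₗ (Bop h g)) + (g * h) • (Cop ∘ₗ (Aop h g)) - g • (Dop h ∘ₗ (Dop h)) := by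
    refine opext fun α β γ δ => ?_
    simpa using rel_db_ee h g δ α β γ
  simpa using LinearMap.congr_fun this v

lemma rel_ab_ee : ∀ γ δ α β, Bop h g (Aop h g (ee α β γ δ)) =
    Aop h g (Bop h g (ee α β γ δ)) + h • Dop h (Aop h g (ee α β γ δ))
      - h • Cop (Bop h g (ee α β γ δ)) + (h * h) • Cop (Aop h g (ee α β γ δ))
      - h • Aop h g (Aop h g (ee α β γ δ))
  | 0, 0, α, β => by
      have key : Aop h g (ee α β 0 0) = ee α (β+1) 0 0 := by simp
      rw [key, Bop_ee, Bop_ee, fB, key]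
  | γ+1, 0, α, β => by
      have key : ee α β (γ+1) 0 = Dop h (ee α β γ 0) := by simp
      rw [key]
      simp only [rel_ab_ee γ 0, rel_ca, rel_cd, rel_da, rel_cb, rel_db, map_add, map_sub,
        map_smul, smul_add, smul_sub, smul_smul]
      module
  | γ, δ+1, α, β => by
      have key : ee α β γ (δ+1) = Cop (ee α β γ δ) := (Cop_ee α β γ δ).symm
      rw [key]
      simp only [rel_ab_ee γ δ, rel_ca, rel_cd, rel_da, rel_cb, rel_db, map_add, map_sub,
        map_smul, smul_add, smul_sub, smul_smul]
      module
  termination_by γ δ => (γ, δ)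

lemma rel_ab (v : M) :
    Bop h g (Aop h g v) = Aop h g (Bop h g v) + h • Dop h (Aop h g v) - h • Cop (Bop h g v)
      + (h * h) • Cop (Aop h g v) - h • Aop h g (Aop h g v) := by
  have : (Bop h g) ∘ₗ (Aop h g) = Aop h g ∘ₗ (Bop h g) + h • (Dop h ∘ₗ (Aop h g))
      - h • (Cop ∘ₗ (Bop h g)) + (h * h) • (Cop ∘ₗ (Aop h g))
      - h • (Aop h g ∘ₗ (Aop h g)) := by
    refine opext fun α β γ δ => ?_
    simpa using rel_ab_ee h g γ δ α β
  simpa using LinearMap.congr_fun this v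

/-! ### The representation of `A(R)` by right multiplication operators -/

noncomputable def genOp : JGen → Module.End ℂ M
  | .a => Aop h g
  | .b => Bop h g
  | .c => Cop
  | .d => Dop h

noncomputable def rep : FreeAlgebra ℂ JGen →ₐ[ℂ] (Module.End ℂ M)ᵐᵒᵖ :=
  FreeAlgebra.lift ℂ fun x => MulOpposite.op (genOp h g x)

@[simp] lemma rep_Fa : rep h g Fa = MulOpposite.op (Aop h g) := FreeAlgebra.lift_ι_apply _ _
@[simp] lemma rep_Fb : rep h g Fb = MulOpposite.op (Bop h g) := FreeAlgebra.lift_ι_apply _ _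
@[simp] lemma rep_Fc : rep h g Fc = MulOpposite.op Cop := FreeAlgebra.lift_ι_apply _ _
@[simp] lemma rep_Fd : rep h g Fd = MulOpposite.op (Dop h) := FreeAlgebra.lift_ι_apply _ _

lemma rep_rel : ∀ ⦃x y⦄, JRel h g x y → rep h g x = rep h g y := by
  intro x y r
  cases r <;>
    · simp only [map_mul, map_sub, map_add, map_smul, rep_Fa, rep_Fb, rep_Fc, rep_Fd,
        ← MulOpposite.op_mul, ← MulOpposite.op_smul, ← MulOpposite.op_sub, ← MulOpposite.op_add]
      rw [MulOpposite.op_inj]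
      refine LinearMap.ext fun v => ?_
      simp only [Module.End.mul_apply, LinearMap.sub_apply, LinearMap.add_apply,
        LinearMap.smul_apply, rel_ca, rel_cd, rel_da, rel_cb, rel_db, rel_ab,
        smul_sub, smul_add, smul_smul]
      try module

noncomputable def repQ : JA h g →ₐ[ℂ] (Module.End ℂ M)ᵐᵒᵖ :=
  RingQuot.liftAlgHom ℂ ⟨rep h g, fun _ _ r => rep_rel h g r⟩

noncomputable def evv : (Module.End ℂ M)ᵐᵒᵖ →ₗ[ℂ] M where
  toFun T := T.unop (ee 0 0 0 0)
  map_add' x y := by simp [MulOpposite.unop_add]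
  map_smul' c x := by simp [MulOpposite.unop_smul]

noncomputable def Fmap : JA h g →ₗ[ℂ] M := (evv).comp (repQ h g).toLinearMap

@[simp] lemma Bpow (α : ℕ) : (Bop h g ^ α) (ee 0 0 0 0) = ee α 0 0 0 := by
  induction α with
  | zero => simp
  | succ n ih => rw [pow_succ', Module.End.mul_apply, ih, Bop_ee, fB]

@[simp] lemma Apow (α β : ℕ) : (Aop h g ^ β) (ee α 0 0 0) = ee α β 0 0 := by
  induction β with
  | zero => simp
  | succ n ih => rw [pow_succ', Module.End.mul_apply, ih]; simp

@[simp] lemma Dpow (α β γ : ℕ) : (Dop h ^ γ) (ee α β 0 0) = ee α β γ 0 := by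
  induction γ with
  | zero => simp
  | succ n ih => rw [pow_succ', Module.End.mul_apply, ih]; simp

@[simp] lemma Cpow (α β γ δ : ℕ) : (Cop ^ δ) (ee α β γ 0) = ee α β γ δ := by
  induction δ with
  | zero => simp
  | succ n ih => rw [pow_succ', Module.End.mul_apply, ih]; simp

noncomputable def mono (p : Idx) : JA h g :=
  qb h g ^ p.1 * qa h g ^ p.2.1 * qd h g ^ p.2.2.1 * qc h g ^ p.2.2.2

lemma repQ_qa : repQ h g (qa h g) = MulOpposite.op (Aop h g) := by
  rw [qa, repQ, RingQuot.liftAlgHom_mkAlgHom_apply, rep_Fa]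
lemma repQ_qb : repQ h g (qb h g) = MulOpposite.op (Bop h g) := by
  rw [qb, repQ, RingQuot.liftAlgHom_mkAlgHom_apply, rep_Fb]
lemma repQ_qc : repQ h g (qc h g) = MulOpposite.op Cop := by
  rw [qc, repQ, RingQuot.liftAlgHom_mkAlgHom_apply, rep_Fc]
lemma repQ_qd : repQ h g (qd h g) = MulOpposite.op (Dop h) := by
  rw [qd, repQ, RingQuot.liftAlgHom_mkAlgHom_apply, rep_Fd]

lemma Fmap_mono (p : Idx) : Fmap h g (mono h g p) = Finsupp.single p 1 := by
  obtain ⟨α, β, γ, δ⟩ := p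
  have h1 : Fmap h g (mono h g (α, β, γ, δ))
      = ((repQ h g (mono h g (α, β, γ, δ))).unop) (ee 0 0 0 0) := rfl
  rw [h1]
  simp only [mono, map_mul, map_pow, repQ_qa, repQ_qb, repQ_qc, repQ_qd]
  simp only [← MulOpposite.op_pow, ← MulOpposite.op_mul, MulOpposite.unop_op]
  simp only [Module.End.mul_apply, Bpow, Apow, Dpow, Cpow]
  rfl

lemma mono_linearIndependent : LinearIndependent ℂ (mono h g) := by
  apply LinearIndependent.of_comp (Fmap h g)
  have : (Fmap h g) ∘ (mono h g) = fun p : Idx => Finsupp.single p 1 := by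
    funext p; exact Fmap_mono h g p
  rw [this, ← Finsupp.coe_basisSingleOne]
  exact (Finsupp.basisSingleOne (R := ℂ) (ι := Idx)).linearIndependent

/-! ### Spanning: the normal-form monomials span `A(R)` -/

lemma q_ca : qc h g * qa h g = qa h g * qc h g - g • (qc h g * qc h g) := by
  simp only [qa, qc, ← map_mul, ← map_smul, ← map_sub]
  exact RingQuot.mkAlgHom_rel ℂ JRel.ca

lemma q_cd : qc h g * qd h g = qd h g * qc h g - h • (qc h g * qc h g) := by
  simp only [qc, qd, ← map_mul, ← map_smul, ← map_sub]
  exact RingQuot.mkAlgHom_rel ℂ JRel.cd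

lemma q_da : qd h g * qa h g = qa h g * qd h g + h • (qa h g * qc h g) - g • (qd h g * qc h g) := by
  simp only [qa, qc, qd, ← map_mul, ← map_smul, ← map_sub, ← map_add]
  exact RingQuot.mkAlgHom_rel ℂ JRel.da

lemma q_cb : qc h g * qb h g = qb h g * qc h g - h • (qa h g * qc h g) - g • (qd h g * qc h g)
    + (g * h) • (qc h g * qc h g) := by
  simp only [qa, qb, qc, qd, ← map_mul, ← map_smul, ← map_sub, ← map_add]
  exact RingQuot.mkAlgHom_rel ℂ JRel.cb

lemma q_db : qd h g * qb h g = qb h g * qd h g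
    + g • (qa h g * qd h g - qb h g * qc h g + h • (qa h g * qc h g) - qd h g * qd h g) := by
  simp only [qa, qb, qc, qd, ← map_mul, ← map_smul, ← map_sub, ← map_add]
  exact RingQuot.mkAlgHom_rel ℂ JRel.db

lemma q_ab : qa h g * qb h g = qb h g * qa h g
    + h • (qa h g * qd h g - qb h g * qc h g + h • (qa h g * qc h g) - qa h g * qa h g) := by
  simp only [qa, qb, qc, qd, ← map_mul, ← map_smul, ← map_sub, ← map_add]
  exact RingQuot.mkAlgHom_rel ℂ JRel.ab

noncomputable def SS : Submodule ℂ (JA h g) := Submodule.span ℂ (Set.range (mono h g))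

lemma mono_mem (p : Idx) : mono h g p ∈ SS h g := Submodule.subset_span ⟨p, rfl⟩

lemma one_mem' : (1 : JA h g) ∈ SS h g := by
  have : mono h g (0, 0, 0, 0) = 1 := by simp [mono]
  rw [← this]; exact mono_mem h g _

lemma mono_mul_c (α β γ δ : ℕ) :
    mono h g (α, β, γ, δ) * qc h g = mono h g (α, β, γ, δ+1) := by
  simp [mono, pow_succ, mul_assoc]

lemma mono_mul_d0 (α β γ : ℕ) :
    mono h g (α, β, γ, 0) * qd h g = mono h g (α, β, γ+1, 0) := by
  simp [mono, pow_succ, mul_assoc]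

lemma mono_mul_a00 (α β : ℕ) :
    mono h g (α, β, 0, 0) * qa h g = mono h g (α, β+1, 0, 0) := by
  simp [mono, pow_succ, mul_assoc]

lemma mono_mul_b000 (α : ℕ) :
    mono h g (α, 0, 0, 0) * qb h g = mono h g (α+1, 0, 0, 0) := by
  simp [mono, pow_succ, mul_assoc]

lemma Smul (t : JA h g) (Hm : ∀ p, mono h g p * t ∈ SS h g) :
    ∀ x ∈ SS h g, x * t ∈ SS h g := by
  intro x hx
  refine Submodule.span_induction (p := fun y _ => y * t ∈ SS h g) ?_ ?_ ?_ ?_ hx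
  · rintro y ⟨p, rfl⟩; exact Hm p
  · show (0 : JA h g) * t ∈ SS h g
    rw [zero_mul]; exact zero_mem _
  · intro u v _ _ hu hv
    show (u + v) * t ∈ SS h g
    rw [add_mul]; exact add_mem hu hv
  · intro a u _ hu
    show (a • u) * t ∈ SS h g
    rw [smul_mul_assoc]; exact Submodule.smul_mem _ _ hu

lemma Smulc : ∀ x ∈ SS h g, x * qc h g ∈ SS h g := by
  refine Smul h g _ fun p => ?_
  obtain ⟨α, β, γ, δ⟩ := p
  rw [mono_mul_c]; exact mono_mem h g _

lemma mono_mul_d : ∀ δ α β γ, mono h g (α, β, γ, δ) * qd h g ∈ SS h g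
  | 0, α, β, γ => by rw [mono_mul_d0]; exact mono_mem h g _
  | δ+1, α, β, γ => by
      have e1 : mono h g (α, β, γ, δ+1) = mono h g (α, β, γ, δ) * qc h g :=
        (mono_mul_c h g α β γ δ).symm
      rw [e1, mul_assoc, q_cd, mul_sub, mul_smul_comm, ← mul_assoc, ← mul_assoc]
      exact sub_mem (Smulc h g _ (mono_mul_d δ α β γ))
        (Submodule.smul_mem _ _ (Smulc h g _ (Smulc h g _ (mono_mem h g _))))

lemma Smuld : ∀ x ∈ SS h g, x * qd h g ∈ SS h g := by
  refine Smul h g _ fun p => ?_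
  obtain ⟨α, β, γ, δ⟩ := p
  exact mono_mul_d h g δ α β γ

lemma mono_mul_a : ∀ δ γ α β, mono h g (α, β, γ, δ) * qa h g ∈ SS h g
  | 0, 0, α, β => by rw [mono_mul_a00]; exact mono_mem h g _
  | 0, γ+1, α, β => by
      have e1 : mono h g (α, β, γ+1, 0) = mono h g (α, β, γ, 0) * qd h g :=
        (mono_mul_d0 h g α β γ).symm
      rw [e1, mul_assoc, q_da, mul_sub, mul_add, mul_smul_comm, mul_smul_comm,
        ← mul_assoc, ← mul_assoc, ← mul_assoc]
      refine sub_mem (add_mem ?_ (Submodule.smul_mem _ _ ?_)) (Submodule.smul_mem _ _ ?_)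
      · exact Smuld h g _ (mono_mul_a 0 γ α β)
      · exact Smulc h g _ (mono_mul_a 0 γ α β)
      · exact Smulc h g _ (mono_mul_d h g 0 α β γ)
  | δ+1, γ, α, β => by
      have e1 : mono h g (α, β, γ, δ+1) = mono h g (α, β, γ, δ) * qc h g :=
        (mono_mul_c h g α β γ δ).symm
      rw [e1, mul_assoc, q_ca, mul_sub, mul_smul_comm, ← mul_assoc, ← mul_assoc]
      refine sub_mem ?_ (Submodule.smul_mem _ _ ?_)
      · exact Smulc h g _ (mono_mul_a δ γ α β)
      · exact Smulc h g _ (Smulc h g _ (mono_mem h g _))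
  termination_by δ γ => (δ, γ)

lemma Smula : ∀ x ∈ SS h g, x * qa h g ∈ SS h g := by
  refine Smul h g _ fun p => ?_
  obtain ⟨α, β, γ, δ⟩ := p
  exact mono_mul_a h g δ γ α β

lemma mono_mul_b : ∀ δ γ β α, mono h g (α, β, γ, δ) * qb h g ∈ SS h g
  | 0, 0, 0, α => by rw [mono_mul_b000]; exact mono_mem h g _
  | 0, 0, β+1, α => by
      have e1 : mono h g (α, β+1, 0, 0) = mono h g (α, β, 0, 0) * qa h g :=
        (mono_mul_a00 h g α β).symm
      rw [e1, mul_assoc, q_ab, mul_add, mul_smul_comm, mul_sub, mul_add, mul_sub,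
        mul_smul_comm, ← mul_assoc, ← mul_assoc, ← mul_assoc, ← mul_assoc, ← mul_assoc]
      refine add_mem ?_ (Submodule.smul_mem _ _ (sub_mem (add_mem (sub_mem ?_ ?_)
        (Submodule.smul_mem _ _ ?_)) ?_))
      · exact Smula h g _ (mono_mul_b 0 0 β α)
      · exact Smuld h g _ (mono_mul_a h g 0 0 α β)
      · exact Smulc h g _ (mono_mul_b 0 0 β α)
      · exact Smulc h g _ (mono_mul_a h g 0 0 α β)
      · exact Smula h g _ (mono_mul_a h g 0 0 α β)
  | 0, γ+1, β, α => by
      have e1 : mono h g (α, β, γ+1, 0) = mono h g (α, β, γ, 0) * qd h g :=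
        (mono_mul_d0 h g α β γ).symm
      rw [e1, mul_assoc, q_db, mul_add, mul_smul_comm, mul_sub, mul_add, mul_sub,
        mul_smul_comm, ← mul_assoc, ← mul_assoc, ← mul_assoc, ← mul_assoc, ← mul_assoc]
      refine add_mem ?_ (Submodule.smul_mem _ _ (sub_mem (add_mem (sub_mem ?_ ?_)
        (Submodule.smul_mem _ _ ?_)) ?_))
      · exact Smuld h g _ (mono_mul_b 0 γ β α)
      · exact Smuld h g _ (mono_mul_a h g 0 γ α β)
      · exact Smulc h g _ (mono_mul_b 0 γ β α)
      · exact Smulc h g _ (mono_mul_a h g 0 γ α β)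
      · exact Smuld h g _ (mono_mul_d h g 0 α β γ)
  | δ+1, γ, β, α => by
      have e1 : mono h g (α, β, γ, δ+1) = mono h g (α, β, γ, δ) * qc h g :=
        (mono_mul_c h g α β γ δ).symm
      rw [e1, mul_assoc, q_cb, mul_add, mul_sub, mul_sub, mul_smul_comm, mul_smul_comm,
        mul_smul_comm, ← mul_assoc, ← mul_assoc, ← mul_assoc, ← mul_assoc]
      refine add_mem (sub_mem (sub_mem ?_ (Submodule.smul_mem _ _ ?_))
        (Submodule.smul_mem _ _ ?_)) (Submodule.smul_mem _ _ ?_)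
      · exact Smulc h g _ (mono_mul_b δ γ β α)
      · exact Smulc h g _ (mono_mul_a h g δ γ α β)
      · exact Smulc h g _ (mono_mul_d h g δ α β γ)
      · exact Smulc h g _ (Smulc h g _ (mono_mem h g _))
  termination_by δ γ β => (δ, γ, β)

lemma Smulb : ∀ x ∈ SS h g, x * qb h g ∈ SS h g := by
  refine Smul h g _ fun p => ?_
  obtain ⟨α, β, γ, δ⟩ := p
  exact mono_mul_b h g δ γ β α

lemma qa_mem : qa h g ∈ SS h g := by
  have : mono h g (0, 1, 0, 0) = qa h g := by simp [mono]
  rw [← this]; exact mono_mem h g _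
lemma qb_mem : qb h g ∈ SS h g := by
  have : mono h g (1, 0, 0, 0) = qb h g := by simp [mono]
  rw [← this]; exact mono_mem h g _
lemma qc_mem : qc h g ∈ SS h g := by
  have : mono h g (0, 0, 0, 1) = qc h g := by simp [mono]
  rw [← this]; exact mono_mem h g _
lemma qd_mem : qd h g ∈ SS h g := by
  have : mono h g (0, 0, 1, 0) = qd h g := by simp [mono]
  rw [← this]; exact mono_mem h g _

lemma span_top : SS h g = ⊤ := by
  rw [eq_top_iff]
  rintro z -
  obtain ⟨w, rfl⟩ := RingQuot.mkAlgHom_surjective ℂ (JRel h g) z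
  suffices H : ∀ w : FreeAlgebra ℂ JGen,
      RingQuot.mkAlgHom ℂ (JRel h g) w ∈ SS h g ∧
        ∀ x ∈ SS h g, x * RingQuot.mkAlgHom ℂ (JRel h g) w ∈ SS h g from (H w).1
  intro w
  induction w using FreeAlgebra.induction with
  | grade0 r =>
      constructor
      · rw [AlgHom.commutes, Algebra.algebraMap_eq_smul_one]
        exact Submodule.smul_mem _ _ (one_mem' h g)
      · intro x hx
        rw [AlgHom.commutes, ← Algebra.commutes, ← Algebra.smul_def]
        exact Submodule.smul_mem _ _ hx
  | grade1 x =>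
      cases x with
      | a => exact ⟨qa_mem h g, Smula h g⟩
      | b => exact ⟨qb_mem h g, Smulb h g⟩
      | c => exact ⟨qc_mem h g, Smulc h g⟩
      | d => exact ⟨qd_mem h g, Smuld h g⟩
  | mul u v hu hv =>
      refine ⟨?_, fun x hx => ?_⟩
      · rw [map_mul]; exact hv.2 _ hu.1
      · rw [map_mul, ← mul_assoc]; exact hv.2 _ (hu.2 x hx)
  | add u v hu hv =>
      refine ⟨?_, fun x hx => ?_⟩
      · rw [map_add]; exact add_mem hu.1 hv.1
      · rw [map_add, mul_add]; exact add_mem (hu.2 x hx) (hv.2 x hx)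

end JPBW

/-- PBW basis of `A(R)`: the ordered monomials `b^α a^β d^γ c^δ` form a linear basis. -/
theorem jordanian_pbw_basis (h g : ℂ) :
    LinearIndependent ℂ (fun p : ℕ × ℕ × ℕ × ℕ =>
      qb h g ^ p.1 * qa h g ^ p.2.1 * qd h g ^ p.2.2.1 * qc h g ^ p.2.2.2) ∧
    Submodule.span ℂ (Set.range (fun p : ℕ × ℕ × ℕ × ℕ =>
      qb h g ^ p.1 * qa h g ^ p.2.1 * qd h g ^ p.2.2.1 * qc h g ^ p.2.2.2)) = ⊤ := by
  exact ⟨JPBW.mono_linearIndependent h g, JPBW.span_top h g⟩
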